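/- Let t_{bag} be the deterministic synchronization tree over {a,b,c,d} whose vertices are the words w ∈ {a,b,c,d}* such that every prefix of w has at least as many a's as b's and at least as many c's as d's, with an edge labelled x from w to wx whenever both are vertices, and an ex-edge from each vertex w satisfying #a(w)=#b(w) and #c(w)=#d(w). Then the path language of t_{bag} is not context-free. -/

import Mathlib

/-- A rooted edge-labelled graph used to represent synchronization trees over an
alphabet `A`.  Edge labels are in `Option A`, where `none` is the special
exit (termination) label `ex` and `some a` is an action label `a ∈ A`. -/
structure SyncTree (A : Type) where
  V : Type
  root : V
  edge : V → Option A → V → Prop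

namespace SyncTree

variable {A : Type}

/-- Reachability along edges. -/
def Reaches (t : SyncTree A) (u v : t.V) : Prop :=
  Relation.ReflTransGen (fun x y => ∃ l, t.edge x l y) u v

/-- `t` is a genuine synchronization tree: every vertex is reachable from the
root, every vertex has at most one incoming edge, the root has no incoming
edge, and targets of exit edges are leaves. -/
def IsTree (t : SyncTree A) : Prop :=
  (∀ v, t.Reaches t.root v) ∧
  (∀ u₁ u₂ l₁ l₂ v, t.edge u₁ l₁ v → t.edge u₂ l₂ v → u₁ = u₂ ∧ l₁ = l₂) ∧
  (∀ u l, ¬ t.edge u l t.root) ∧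
  (∀ u v, t.edge u none v → ∀ l w, ¬ t.edge v l w)

/-- No vertex has two equally-labelled outgoing edges. -/
def Deterministic (t : SyncTree A) : Prop :=
  ∀ u l v₁ v₂, t.edge u l v₁ → t.edge u l v₂ → v₁ = v₂

/-- Bisimilarity of the trees `t` and `t'`. -/
def Bisimilar (t t' : SyncTree A) : Prop :=
  ∃ R : t.V → t'.V → Prop,
    R t.root t'.root ∧
    (∀ u u', R u u' → ∀ l v, t.edge u l v → ∃ v', t'.edge u' l v' ∧ R v v') ∧
    (∀ u u', R u u' → ∀ l v', t'.edge u' l v' → ∃ v, t.edge u l v ∧ R v v')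

/-- The reachable vertices of `t` (the vertices of the tree proper). -/
def Rt (t : SyncTree A) : Type := {v : t.V // t.Reaches t.root v}

/-- An isomorphism between (the reachable parts of) two synchronization trees:
a bijection on vertices preserving the root, the edges and the labels. -/
structure Isomorphism (t t' : SyncTree A) where
  toEquiv : t.Rt ≃ t'.Rt
  map_root : (toEquiv ⟨t.root, Relation.ReflTransGen.refl⟩).1 = t'.root
  map_edge : ∀ (u v : t.Rt) (l : Option A),
    t.edge u.1 l v.1 ↔ t'.edge (toEquiv u).1 l (toEquiv v).1

def Isomorphic (t t' : SyncTree A) : Prop := Nonempty (t.Isomorphism t')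

/-- A morphism of synchronization trees: a function on vertices preserving the
root, the edges and the labels. -/
structure Hom (t t' : SyncTree A) where
  toFun : t.V → t'.V
  map_root : toFun t.root = t'.root
  map_edge : ∀ u l v, t.edge u l v → t'.edge (toFun u) l (toFun v)

/-- `LabeledPath t u w v` : there is a path of `A`-labelled edges from `u` to
`v` whose labels spell the word `w`. -/
inductive LabeledPath (t : SyncTree A) : t.V → List A → t.V → Prop
  | refl (v : t.V) : LabeledPath t v [] v
  | step {u v w : t.V} {a : A} {word : List A} :
      t.edge u (some a) v → LabeledPath t v word w → LabeledPath t u (a :: word) w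

/-- The path language of `t`: the words in `A*` labelling a path from the root
to the source of an exit edge. -/
def pathLanguage (t : SyncTree A) : Language A :=
  { w | ∃ u v, t.LabeledPath t.root w u ∧ t.edge u none v }

/-- The tree `0` with a single vertex and no edges. -/
def zero : SyncTree A := ⟨PUnit, PUnit.unit, fun _ _ _ => False⟩

/-- The tree `1` with a single exit edge. -/
def one : SyncTree A := ⟨Bool, false, fun u l v => u = false ∧ l = none ∧ v = true⟩

/-- The tree denoted by the letter `a`: an `a`-edge followed by an exit edge. -/
def letter (a : A) : SyncTree A :=
  ⟨Fin 3, 0, fun u l v => (u = 0 ∧ l = some a ∧ v = 1) ∨ (u = 1 ∧ l = none ∧ v = 2)⟩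

/-- The sum `t + t'`, obtained by merging the roots of disjoint copies. -/
def sum (t t' : SyncTree A) : SyncTree A where
  V := t.V ⊕ t'.V
  root := Sum.inl t.root
  edge u l v :=
    match u, v with
    | Sum.inl x, Sum.inl y => t.edge x l y
    | Sum.inl x, Sum.inr y => x = t.root ∧ t'.edge t'.root l y
    | Sum.inr x, Sum.inr y => t'.edge x l y
    | Sum.inr _, Sum.inl _ => False

/-- The exit edges of `t`. -/
def ExE (t : SyncTree A) : Type := {p : t.V × t.V // t.edge p.1 none p.2}

/-- The sequential product `t · t'`, obtained by replacing each exit edge of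
`t` by a fresh copy of `t'`. -/
def seq (t t' : SyncTree A) : SyncTree A where
  V := t.V ⊕ (t.ExE × t'.V)
  root := Sum.inl t.root
  edge u l v :=
    match u, v with
    | Sum.inl x, Sum.inl y => (∃ a, l = some a) ∧ t.edge x l y
    | Sum.inl x, Sum.inr p => p.1.1.1 = x ∧ t'.edge t'.root l p.2
    | Sum.inr p, Sum.inr q => p.1 = q.1 ∧ t'.edge p.2 l q.2
    | Sum.inr _, Sum.inl _ => False

end SyncTree

open SyncTree

/-- The four-letter alphabet `{a, b, c, d}`. -/
inductive Bag : Type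
  | a | b | c | d
deriving DecidableEq

/-- Valid histories of the bag: every prefix has at least as many `a`'s as
`b`'s and at least as many `c`'s as `d`'s. -/
def BagValid (w : List Bag) : Prop :=
  ∀ p, p <+: w → p.count Bag.b ≤ p.count Bag.a ∧ p.count Bag.d ≤ p.count Bag.c

lemma bagValid_nil : BagValid [] := by
  intro p hp
  have h := List.prefix_nil.mp hp
  subst h; simp

/-- The synchronization tree of the bag over a two-element value domain: the
vertices are the valid words over `{a,b,c,d}` (with a second copy serving as
targets of exit edges), with an `x`-labelled edge from `w` to `wx` whenever
both are valid, and an exit edge from each vertex `w` with `#a(w) = #b(w)` and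
`#c(w) = #d(w)`. -/
def bagTree : SyncTree Bag where
  V := {w : List Bag // BagValid w} ⊕ {w : List Bag // BagValid w}
  root := Sum.inl ⟨[], bagValid_nil⟩
  edge u l v :=
    match u, v with
    | Sum.inl w, Sum.inl w' => ∃ x : Bag, l = some x ∧ w'.1 = w.1 ++ [x]
    | Sum.inl w, Sum.inr w' => l = none ∧ w' = w ∧
        w.1.count Bag.a = w.1.count Bag.b ∧ w.1.count Bag.c = w.1.count Bag.d
    | _, _ => False

/-!
The path language consists of the valid words with `#a = #b` and `#c = #d`. Pump the word
`aᵖ cᵖ bᵖ dᵖ`: the pumped factor `v x y` has length at most `p`, so it cannot contain both an `a`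
and a `b` (they are separated by `cᵖ`), nor both a `c` and a `d` (separated by `bᵖ`). Pumping
down preserves both balances, so `v y` has as many `a`s as `b`s and as many `c`s as `d`s, which
forces `v y = []`.

The pumping lemma is proved with parse trees: in a parse tree with the fewest rule applications
of a long word, the lowest `|N| + 1` levels of a highest path repeat a nonterminal, and
minimality makes the loop between the two occurrences pump a nonempty part.
-/

namespace ContextFreeGrammar

variable {T : Type*}

/-- `g.Yields s w h k`: the string `s` derives the word `w` through a forest of parse trees of
height `h` using `k` rule applications in total. -/
inductive Yields (g : ContextFreeGrammar T) : List (Symbol T g.NT) → List T → ℕ → ℕ → Prop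
  | nil : g.Yields [] [] 0 0
  | terminal (t : T) {s : List (Symbol T g.NT)} {w : List T} {h k : ℕ} :
      g.Yields s w h k → g.Yields (.terminal t :: s) (t :: w) h k
  | nonterminal {r : ContextFreeRule T g.NT} {s : List (Symbol T g.NT)} {u w : List T}
      {h₁ h₂ k₁ k₂ : ℕ} : r ∈ g.rules → g.Yields r.output u h₁ k₁ → g.Yields s w h₂ k₂ →
      g.Yields (.nonterminal r.input :: s) (u ++ w) (max (h₁ + 1) h₂) (k₁ + 1 + k₂)

variable {g : ContextFreeGrammar T} {A B : g.NT} {s s₁ s₂ : List (Symbol T g.NT)}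
  {w w₁ w₂ : List T} {h h₁ h₂ k k₁ k₂ : ℕ}

namespace Yields

theorem map_terminal (w : List T) : g.Yields (w.map .terminal) w 0 0 := by
  induction w with
  | nil => exact .nil
  | cons t w ih => exact ih.terminal t

theorem singleton {r : ContextFreeRule T g.NT} (hr : r ∈ g.rules) (hy : g.Yields r.output w h k) :
    g.Yields [.nonterminal r.input] w (h + 1) (k + 1) := by
  simpa using hy.nonterminal hr .nil

theorem of_singleton (hy : g.Yields [.nonterminal A] w h k) :
    ∃ r ∈ g.rules, r.input = A ∧ ∃ h' k', h = h' + 1 ∧ k = k' + 1 ∧ g.Yields r.output w h' k' := by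
  cases hy with
  | @nonterminal r _ _ _ h _ k _ hr hu hnil =>
    cases hnil
    exact ⟨r, hr, rfl, h, k, by simp, rfl, by simpa using hu⟩

theorem append (hy₁ : g.Yields s₁ w₁ h₁ k₁) (hy₂ : g.Yields s₂ w₂ h₂ k₂) :
    g.Yields (s₁ ++ s₂) (w₁ ++ w₂) (max h₁ h₂) (k₁ + k₂) := by
  induction hy₁ with
  | nil => simpa using hy₂
  | terminal t _ ih => exact ih.terminal t
  | nonterminal hr hu _ _ ih =>
    simpa only [List.cons_append, List.append_assoc, max_assoc, Nat.add_assoc] using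
      Yields.nonterminal hr hu ih

theorem of_append (hy : g.Yields (s₁ ++ s₂) w h k) :
    ∃ w₁ w₂, w = w₁ ++ w₂ ∧ (∃ h k, g.Yields s₁ w₁ h k) ∧ ∃ h k, g.Yields s₂ w₂ h k := by
  induction s₁ generalizing w h k with
  | nil => exact ⟨[], w, rfl, ⟨0, 0, .nil⟩, h, k, hy⟩
  | cons x s₁ ih =>
    cases hy with
    | terminal t hy =>
      obtain ⟨w₁, w₂, rfl, ⟨_, _, hy₁⟩, hy₂⟩ := ih hy
      exact ⟨t :: w₁, w₂, rfl, ⟨_, _, hy₁.terminal t⟩, hy₂⟩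
    | nonterminal hr hu hy =>
      obtain ⟨w₁, w₂, rfl, ⟨_, _, hy₁⟩, hy₂⟩ := ih hy
      exact ⟨_ ++ w₁, w₂, (List.append_assoc ..).symm, ⟨_, _, Yields.nonterminal hr hu hy₁⟩, hy₂⟩

theorem derives (hy : g.Yields s w h k) : g.Derives s (w.map .terminal) := by
  induction hy with
  | nil => exact .refl _
  | terminal t _ ih => simpa using ih.append_left [.terminal t]
  | @nonterminal r s _ _ _ _ _ _ hr _ _ ihu ihw =>
    have hrule : g.Derives [.nonterminal r.input] r.output :=
      Produces.single ⟨r, hr, by simpa using ContextFreeRule.Rewrites.input_output⟩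
    simpa using ((hrule.trans ihu).append_right s).trans (ihw.append_left _)

end Yields

theorem exists_yields_of_derives (hd : g.Derives s (w.map .terminal)) :
    ∃ h k, g.Yields s w h k := by
  induction hd using Relation.ReflTransGen.head_induction_on with
  | refl => exact ⟨0, 0, .map_terminal w⟩
  | head hp _ ih =>
    obtain ⟨r, hr, hrw⟩ := hp
    obtain ⟨p, q, rfl, rfl⟩ := hrw.exists_parts
    obtain ⟨_, _, hy⟩ := ih
    obtain ⟨w₁, w', rfl, ⟨_, _, hp⟩, _, _, hy'⟩ :=
      Yields.of_append (s₁ := p) (by rwa [List.append_assoc] at hy)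
    obtain ⟨w₂, w₃, rfl, ⟨_, _, hr'⟩, ⟨_, _, hq⟩⟩ := Yields.of_append hy'
    exact ⟨_, _, by simpa using hp.append ((hr'.singleton hr).append hq)⟩

def maxRuleLength (g : ContextFreeGrammar T) : ℕ := max 1 (g.rules.sup fun r => r.output.length)

theorem one_le_maxRuleLength : 1 ≤ g.maxRuleLength := le_max_left _ _

theorem length_output_le_maxRuleLength {r : ContextFreeRule T g.NT} (hr : r ∈ g.rules) :
    r.output.length ≤ g.maxRuleLength :=
  (Finset.le_sup (f := fun r => r.output.length) hr).trans (le_max_right _ _)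

theorem Yields.length_le (hy : g.Yields s w h k) : w.length ≤ s.length * g.maxRuleLength ^ h := by
  have hM := one_le_maxRuleLength (g := g)
  induction hy with
  | nil => simp
  | @terminal t s w h k _ ih =>
    have : 1 ≤ g.maxRuleLength ^ h := Nat.one_le_pow _ _ hM
    simp only [List.length_cons]
    nlinarith
  | @nonterminal r s u w h₁ h₂ k₁ k₂ hr _ _ ihu ihw =>
    set H := max (h₁ + 1) h₂
    have hu : u.length ≤ g.maxRuleLength ^ H :=
      calc u.length ≤ r.output.length * g.maxRuleLength ^ h₁ := ihu
        _ ≤ g.maxRuleLength * g.maxRuleLength ^ h₁ := by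
          gcongr; exact length_output_le_maxRuleLength hr
        _ = g.maxRuleLength ^ (h₁ + 1) := by ring
        _ ≤ g.maxRuleLength ^ H := Nat.pow_le_pow_right hM (le_max_left _ _)
    have hw : w.length ≤ s.length * g.maxRuleLength ^ H :=
      ihw.trans (Nat.mul_le_mul_left _ (Nat.pow_le_pow_right hM (le_max_right _ _)))
    simp only [List.length_append, List.length_cons]
    nlinarith

/-- `g.Context s B v y c` says that `s` derives `v B y` using `c` rules, encoded as: grafting
any parse tree of `B` with yield `x` gives a forest of `s` with yield `v ++ x ++ y`. -/
def Context (s : List (Symbol T g.NT)) (B : g.NT) (v y : List T) (c : ℕ) : Prop :=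
  ∀ ⦃x h k⦄, g.Yields [.nonterminal B] x h k → ∃ h', g.Yields s (v ++ x ++ y) h' (c + k)

namespace Context

variable {C : g.NT} {v y v' y' : List T} {c c' : ℕ}

theorem refl (B : g.NT) : g.Context [.nonterminal B] B [] [] 0 :=
  fun _ h _ hx => ⟨h, by simpa using hx⟩

theorem trans (hc : g.Context s B v y c) (hc' : g.Context [.nonterminal B] C v' y' c') :
    g.Context s C (v ++ v') (y' ++ y) (c + c') := fun _ _ _ hx => by
  obtain ⟨_, hx'⟩ := hc' hx
  obtain ⟨h, hx''⟩ := hc hx'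
  exact ⟨h, by simpa only [List.append_assoc, Nat.add_assoc] using hx''⟩

theorem append_left (hp : g.Yields s₁ w₁ h₁ k₁) (hc : g.Context s B v y c) :
    g.Context (s₁ ++ s) B (w₁ ++ v) y (k₁ + c) := fun _ _ _ hx => by
  obtain ⟨_, hx'⟩ := hc hx
  exact ⟨_, by simpa only [List.append_assoc, Nat.add_assoc] using hp.append hx'⟩

theorem append_right (hc : g.Context s B v y c) (hq : g.Yields s₂ w₂ h₂ k₂) :
    g.Context (s ++ s₂) B v (y ++ w₂) (c + k₂) := fun _ _ k hx => by
  obtain ⟨_, hx'⟩ := hc hx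
  exact ⟨_, by simpa only [List.append_assoc, Nat.add_right_comm _ k] using hx'.append hq⟩

theorem singleton {r : ContextFreeRule T g.NT} (hr : r ∈ g.rules)
    (hc : g.Context r.output B v y c) :
    g.Context [.nonterminal r.input] B v y (c + 1) := fun _ _ k hx => by
  obtain ⟨_, hx'⟩ := hc hx
  exact ⟨_, by simpa only [Nat.add_right_comm _ k] using hx'.singleton hr⟩

theorem yields_pump (hc : g.Context [.nonterminal A] A v y c) {x : List T}
    (hx : g.Yields [.nonterminal A] x h k) (i : ℕ) :
    ∃ h k, g.Yields [.nonterminal A] ((List.replicate i v).flatten ++ x ++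
      (List.replicate i y).flatten) h k := by
  induction i with
  | zero => exact ⟨h, k, by simpa using hx⟩
  | succ i ih =>
    obtain ⟨_, k', hi⟩ := ih
    obtain ⟨h', hi'⟩ := hc hi
    refine ⟨h', c + k', ?_⟩
    rw [List.replicate_succ, List.flatten_cons, List.replicate_succ', List.flatten_concat]
    simpa only [List.append_assoc] using hi'

end Context

namespace Yields

theorem exists_context (hy : g.Yields s w h k) (hh : 0 < h) :
    ∃ B v x y c k', w = v ++ x ++ y ∧ k = c + k' ∧ g.Yields [.nonterminal B] x h k' ∧
      g.Context s B v y c := by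
  induction hy with
  | nil => omega
  | terminal t _ ih =>
    obtain ⟨B, v, x, y, c, k', rfl, rfl, hx, hc⟩ := ih hh
    exact ⟨B, t :: v, x, y, c, k', rfl, rfl, hx,
      by simpa using Context.append_left (Yields.nil.terminal t) hc⟩
  | @nonterminal r s u w h₁ h₂ k₁ k₂ hr hu hw _ ihw =>
    by_cases hh₂ : h₂ ≤ h₁ + 1
    · refine ⟨r.input, [], u, w, k₂, k₁ + 1, by simp, by ring, ?_, ?_⟩
      · simpa [hh₂] using hu.singleton hr
      · simpa using (Context.refl r.input).append_right hw
    · obtain ⟨B, v, x, y, c, k', rfl, rfl, hx, hc⟩ := ihw (by omega)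
      refine ⟨B, u ++ v, x, y, k₁ + 1 + c, k', by simp, by ring, ?_, ?_⟩
      · rwa [max_eq_right (by omega)]
      · simpa using Context.append_left (hu.singleton hr) hc

theorem exists_child (hy : g.Yields [.nonterminal A] w (h + 2) k) :
    ∃ B v x y c k', w = v ++ x ++ y ∧ k = c + k' ∧ 0 < c ∧
      g.Yields [.nonterminal B] x (h + 1) k' ∧ g.Context [.nonterminal A] B v y c := by
  obtain ⟨r, hr, rfl, h', _, hh, rfl, hy⟩ := hy.of_singleton
  obtain rfl : h' = h + 1 := by omega
  obtain ⟨B, v, x, y, c, k', rfl, rfl, hx, hc⟩ := hy.exists_context (by omega)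
  exact ⟨B, v, x, y, c + 1, k', rfl, by ring, by omega, hx, hc.singleton hr⟩

end Yields

/-- A parse tree of `A` with yield `w` and `k` rule applications factors as
`A ⇒* u B z`, `B ⇒⁺ v B y`, `B ⇒* x` with `w = u ++ v ++ x ++ y ++ z` and `|v x y| ≤ n`. -/
def HasLoop (A : g.NT) (w : List T) (k n : ℕ) : Prop :=
  ∃ B u v x y z c c' k' h, w = u ++ v ++ x ++ y ++ z ∧ (v ++ x ++ y).length ≤ n ∧
    k = c + c' + k' ∧ 0 < c' ∧ g.Context [.nonterminal A] B u z c ∧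
    g.Context [.nonterminal B] B v y c' ∧ g.Yields [.nonterminal B] x h k'

theorem HasLoop.mono {n n' : ℕ} (hl : g.HasLoop A w k n) (hn : n ≤ n') : g.HasLoop A w k n' := by
  obtain ⟨B, u, v, x, y, z, c, c', k', h, hw, hlen, hk, hc', hc⟩ := hl
  exact ⟨B, u, v, x, y, z, c, c', k', h, hw, hlen.trans hn, hk, hc', hc⟩

theorem HasLoop.of_context {v y : List T} {c n : ℕ} (hc : g.Context [.nonterminal A] B v y c)
    (hl : g.HasLoop B w k n) : g.HasLoop A (v ++ w ++ y) (c + k) n := by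
  obtain ⟨C, u, v', x, y', z, c₀, c', k', h, rfl, hlen, rfl, hc', hu, hv, hx⟩ := hl
  exact ⟨C, v ++ u, v', x, y', z ++ y, c + c₀, c', k', h, by simp, hlen, by ring, hc',
    hc.trans hu, hv, hx⟩

def inputs (g : ContextFreeGrammar T) [DecidableEq g.NT] : Finset g.NT :=
  g.rules.image ContextFreeRule.input

theorem Yields.input_mem_inputs [DecidableEq g.NT] (hy : g.Yields [.nonterminal A] w h k) :
    A ∈ g.inputs := by
  obtain ⟨r, hr, rfl, -⟩ := hy.of_singleton
  exact Finset.mem_image_of_mem _ hr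

/-- Walking down a highest path and adding the nonterminals met to `F`, the walk must meet `F`
again before the height is used up, since `F` grows at each step inside `g.inputs`. -/
theorem Yields.hasLoop_or_reaches [DecidableEq g.NT] {F : Finset g.NT} (hF : F ⊆ g.inputs)
    (hy : g.Yields [.nonterminal A] w h k) (hcard : g.inputs.card < h + F.card) :
    g.HasLoop A w k w.length ∨ ∃ B ∈ F, ∃ v x y c k' h', w = v ++ x ++ y ∧ k = c + k' ∧
      g.Context [.nonterminal A] B v y c ∧ g.Yields [.nonterminal B] x h' k' := by
  induction h generalizing A w k F with
  | zero => exact absurd (Finset.card_le_card hF) (by omega)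
  | succ h ih =>
    by_cases hA : A ∈ F
    · exact .inr ⟨A, hA, [], w, [], 0, k, h + 1, by simp, by simp, .refl A, hy⟩
    have hAF : insert A F ⊆ g.inputs := Finset.insert_subset hy.input_mem_inputs hF
    have hcardAF := Finset.card_le_card hAF
    rw [Finset.card_insert_of_notMem hA] at hcardAF
    obtain ⟨h, rfl⟩ : ∃ h', h = h' + 1 := ⟨h - 1, by omega⟩
    obtain ⟨B, v, x, y, c, k', rfl, rfl, hc, hx, hvy⟩ := hy.exists_child
    rcases ih hAF hx (by rw [Finset.card_insert_of_notMem hA]; omega) with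
      hl | ⟨C, hC, v', x', y', c', k'', h', rfl, rfl, hc', hx'⟩
    · exact .inl ((hl.of_context hvy).mono (by simp; omega))
    rcases Finset.mem_insert.mp hC with rfl | hC
    · exact .inl ⟨C, [], v ++ v', x', y' ++ y, [], 0, c + c', k'', h', by simp, by simp, by ring,
        by omega, .refl C, hvy.trans hc', hx'⟩
    · exact .inr ⟨C, hC, v ++ v', x', y' ++ y, c + c', k'', h', by simp, by ring, hvy.trans hc',
        hx'⟩

theorem Yields.hasLoop [DecidableEq g.NT] (hy : g.Yields [.nonterminal A] w h k)
    (hh : g.inputs.card < h) : g.HasLoop A w k (g.maxRuleLength ^ (g.inputs.card + 1)) := by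
  induction h, hh using Nat.le_induction generalizing A w k with
  | base =>
    refine ((hy.hasLoop_or_reaches (Finset.empty_subset _) (by simp)).resolve_right
      (by simp)).mono ?_
    simpa using hy.length_le
  | succ h hh ih =>
    obtain ⟨h, rfl⟩ : ∃ h', h = h' + 1 := ⟨h - 1, by omega⟩
    obtain ⟨B, v, x, y, c, k', rfl, rfl, -, hx, hc⟩ := hy.exists_child
    exact (ih hx).of_context hc

end ContextFreeGrammar

open ContextFreeGrammar in
theorem Language.IsContextFree.exists_pumping {T : Type*} {L : Language T}
    (hL : L.IsContextFree) :
    ∃ p, ∀ w ∈ L, p ≤ w.length → ∃ u v x y z, w = u ++ v ++ x ++ y ++ z ∧ v ++ y ≠ [] ∧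
      (v ++ x ++ y).length ≤ p ∧
      ∀ i, u ++ (List.replicate i v).flatten ++ x ++ (List.replicate i y).flatten ++ z ∈ L := by
  classical
  obtain ⟨g, rfl⟩ := hL
  set p := g.maxRuleLength ^ (g.inputs.card + 1)
  refine ⟨p + 1, fun w hw hlen => ?_⟩
  -- A parse tree with the fewest rule applications: its loops cannot have `v = y = []`.
  have hex : ∃ k h, g.Yields [.nonterminal g.initial] w h k := by
    obtain ⟨h, k, hy⟩ := exists_yields_of_derives hw
    exact ⟨k, h, hy⟩
  obtain ⟨h, hy⟩ := Nat.find_spec hex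
  have hh : g.inputs.card < h := by
    by_contra! hh
    have : g.maxRuleLength ^ h ≤ p := Nat.pow_le_pow_right one_le_maxRuleLength (by omega)
    have := hy.length_le
    simp only [List.length_singleton, one_mul] at this
    omega
  obtain ⟨B, u, v, x, y, z, c, c', k', h', rfl, hlen, hk, hc', hu, hv, hx⟩ := hy.hasLoop hh
  refine ⟨u, v, x, y, z, rfl, fun hvy => ?_, by omega, fun i => ?_⟩
  · obtain ⟨rfl, rfl⟩ := List.append_eq_nil_iff.mp hvy
    obtain ⟨h'', hux⟩ := hu hx
    have := Nat.find_min' hex ⟨h'', by simpa using hux⟩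
    omega
  · obtain ⟨_, _, hi⟩ := hv.yields_pump hx i
    obtain ⟨_, hui⟩ := hu hi
    simpa [List.append_assoc] using hui.derives

theorem List.count_eq_zero_or_count_eq_zero_of_isInfix {α : Type*} [BEq α] [LawfulBEq α]
    {a b : α} {s X Y Z : List α} (hs : s <:+: X ++ Y ++ Z) (hlen : s.length ≤ Y.length)
    (ha : a ∉ Y ++ Z) (hb : b ∉ X ++ Y) : s.count a = 0 ∨ s.count b = 0 := by
  obtain ⟨u, z, h⟩ := hs
  rcases le_or_gt X.length u.length with hu | hu
  · have hX : X <+: u ++ s ++ z := ⟨Y ++ Z, by rw [h, List.append_assoc]⟩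
    obtain ⟨bs, rfl⟩ : X <+: u := List.prefix_of_prefix_length_le hX ⟨s ++ z, by simp⟩ hu
    have hYZ : bs ++ s ++ z = Y ++ Z := by simpa [List.append_assoc] using h
    exact .inl (List.count_eq_zero.mpr fun has => ha (List.IsInfix.mem has ⟨bs, z, hYZ⟩))
  · have hXY : u ++ s <+: X ++ Y :=
      List.prefix_of_prefix_length_le ⟨z, h⟩ ⟨Z, rfl⟩ (by simp; omega)
    exact .inr (List.count_eq_zero.mpr fun hbs =>
      hb (List.IsInfix.mem hbs ((List.suffix_append u s).isInfix.trans hXY.isInfix)))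

namespace SyncTree

variable {A : Type} {t : SyncTree A}

theorem labeledPath_cons_iff {u v : t.V} {a : A} {w : List A} :
    t.LabeledPath u (a :: w) v ↔ ∃ u', t.edge u (some a) u' ∧ t.LabeledPath u' w v :=
  ⟨fun | .step he hp => ⟨_, he, hp⟩, fun ⟨_, he, hp⟩ => .step he hp⟩

end SyncTree

theorem BagValid.of_append {w₁ w₂ : List Bag} (h : BagValid (w₁ ++ w₂)) : BagValid w₁ :=
  fun p hp => h p (hp.trans (List.prefix_append _ _))

theorem bagValid_append {X Y : List Bag} (hXb : X.count .b = 0) (hXd : X.count .d = 0)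
    (hb : Y.count .b ≤ X.count .a) (hd : Y.count .d ≤ X.count .c) : BagValid (X ++ Y) := by
  rintro q ⟨r, hqr⟩
  rcases List.append_eq_append_iff.mp hqr with ⟨as, rfl, -⟩ | ⟨bs, rfl, rfl⟩ <;>
    simp only [List.count_append] at * <;> omega

theorem bagTree_labeledPath_iff {w₀ w : List Bag} (h₀ : BagValid w₀) {u : bagTree.V} :
    bagTree.LabeledPath (.inl ⟨w₀, h₀⟩) w u ↔ ∃ h : BagValid (w₀ ++ w), u = .inl ⟨w₀ ++ w, h⟩ := by
  induction w generalizing w₀ with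
  | nil =>
    simp only [List.append_nil]
    exact ⟨fun | .refl _ => ⟨h₀, rfl⟩, fun ⟨_, hu⟩ => hu ▸ .refl _⟩
  | cons x w ih =>
    refine labeledPath_cons_iff.trans ⟨?_, ?_⟩
    · rintro ⟨⟨w₁, h₁⟩ | w₁, he, hp⟩
      · obtain ⟨x, hx, rfl⟩ := he
        cases hx
        simpa using (ih h₁).mp hp
      · exact absurd he.1 (by simp)
    · rintro ⟨h, rfl⟩
      have h₁ : BagValid (w₀ ++ [x]) := BagValid.of_append (w₂ := w) (by simpa using h)
      exact ⟨.inl ⟨w₀ ++ [x], h₁⟩, ⟨x, rfl, rfl⟩,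
        (ih h₁).mpr ⟨by simpa using h, congrArg Sum.inl (Subtype.ext (by simp))⟩⟩

theorem mem_bagTree_pathLanguage_iff {w : List Bag} : w ∈ bagTree.pathLanguage ↔
    BagValid w ∧ w.count .a = w.count .b ∧ w.count .c = w.count .d := by
  constructor
  · rintro ⟨u, v, hp, he⟩
    obtain ⟨h, rfl⟩ := (bagTree_labeledPath_iff bagValid_nil).mp hp
    rcases v with v | v
    · obtain ⟨x, hx, -⟩ := he
      cases hx
    · obtain ⟨-, rfl, hab, hcd⟩ := he
      exact ⟨by simpa using h, by simpa using hab, by simpa using hcd⟩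
  · rintro ⟨hw, hab, hcd⟩
    exact ⟨.inl ⟨w, hw⟩, .inr ⟨w, hw⟩, (bagTree_labeledPath_iff bagValid_nil).mpr
      ⟨by simpa using hw, congrArg Sum.inl (Subtype.ext (List.nil_append w).symm)⟩, rfl, rfl,
      hab, hcd⟩

def bagWord (p : ℕ) : List Bag :=
  List.replicate p .a ++ List.replicate p .c ++ (List.replicate p .b ++ List.replicate p .d)

theorem count_bagWord (p : ℕ) (t : Bag) : (bagWord p).count t = p := by
  cases t <;> simp [bagWord, List.count_replicate]

theorem bagWord_mem_pathLanguage (p : ℕ) : bagWord p ∈ bagTree.pathLanguage :=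
  mem_bagTree_pathLanguage_iff.mpr ⟨bagValid_append (by simp [List.count_replicate])
    (by simp [List.count_replicate]) (by simp [List.count_replicate])
    (by simp [List.count_replicate]), by simp only [count_bagWord], by simp only [count_bagWord]⟩

/-- A factor of length at most `p` cannot reach from the `a`s to the `b`s, nor from the `c`s to
the `d`s. -/
theorem eq_nil_of_bagWord_eq {p : ℕ} {u v x y z : List Bag}
    (hw : bagWord p = u ++ v ++ x ++ y ++ z) (hlen : (v ++ x ++ y).length ≤ p)
    (hab : (u ++ x ++ z).count .a = (u ++ x ++ z).count .b)
    (hcd : (u ++ x ++ z).count .c = (u ++ x ++ z).count .d) : v ++ y = [] := by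
  have hinfix : v ++ x ++ y <:+: bagWord p := ⟨u, z, by rw [hw]; simp⟩
  have hab' := List.count_eq_zero_or_count_eq_zero_of_isInfix (a := Bag.a) (b := .b)
    (X := List.replicate p .a) (Y := List.replicate p .c)
    (Z := List.replicate p .b ++ List.replicate p .d)
    (by simpa [bagWord, List.append_assoc] using hinfix) (by simpa using hlen) (by simp) (by simp)
  have hcd' := List.count_eq_zero_or_count_eq_zero_of_isInfix (a := Bag.c) (b := .d)
    (X := List.replicate p .a ++ List.replicate p .c) (Y := List.replicate p .b)
    (Z := List.replicate p .d)
    (by simpa [bagWord, List.append_assoc] using hinfix) (by simpa using hlen) (by simp) (by simp)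
  have hsplit (t : Bag) : p = (u ++ x ++ z).count t + (v ++ y).count t := by
    rw [← count_bagWord p t, hw]
    simp only [List.count_append]
    omega
  refine List.eq_nil_iff_forall_not_mem.mpr fun t ht => ?_
  have hpos := List.count_pos_iff.mpr ht
  have := hsplit .a; have := hsplit .b; have := hsplit .c; have := hsplit .d
  simp only [List.count_append] at *
  cases t <;> omega

/-- The path language of the synchronization tree of the bag is not
context-free. -/
theorem bagTree_pathLanguage_not_contextFree :
    ¬ (bagTree.pathLanguage).IsContextFree := by
  intro hL
  obtain ⟨p, hp⟩ := hL.exists_pumping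
  obtain ⟨u, v, x, y, z, hw, hvy, hlen, hpump⟩ :=
    hp (bagWord p) (bagWord_mem_pathLanguage p) (by simp [bagWord])
  have hdown : u ++ x ++ z ∈ bagTree.pathLanguage := by simpa using hpump 0
  obtain ⟨-, hab, hcd⟩ := mem_bagTree_pathLanguage_iff.mp hdown
  exact hvy (eq_nil_of_bagWord_eq hw hlen hab hcd)
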